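/- Let m ≥ 0 be an integer and let e be a tame Coxeter frieze pattern of width m over ℝ. If e(i,i) is an integer for every i ∈ ℤ (i.e. the first row of the frieze consists of integers), then e(i,j) is an integer for all i,j ∈ ℤ. -/

import Mathlib

/-!
In a unimodular tiling the three consecutive columns `j, j+1, j+2` of any two consecutive rows
satisfy `x (j+2) = a * x (j+1) - x j`, where `a` is the `2 × 2` minor on columns `j, j+2`.
Tameness forces the third row to satisfy the same recurrence, so the coefficient does not depend
on the row. Evaluating it on the row through `e (j+2) j = 0`, `e (j+2) (j+1) = 1` shows that it
is the diagonal entry `e (j+2) (j+2)`. Hence every row obeys a recurrence with integral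
coefficients, starting from the integral values `0, 1`, and is therefore integral.
-/

namespace SL2Tiling

variable {R : Type*} [CommRing R] (e : ℤ → ℤ → R)

def IsUnimodular : Prop :=
  ∀ i j : ℤ, e i j * e (i + 1) (j + 1) - e i (j + 1) * e (i + 1) j = 1

def IsTame : Prop :=
  ∀ i j : ℤ, Matrix.det (Matrix.of fun r c : Fin 3 => e (i + (r : ℕ)) (j + (c : ℕ))) = 0

def coeff (i j : ℤ) : R :=
  e i j * e (i + 1) (j + 2) - e i (j + 2) * e (i + 1) j

variable {e}

theorem IsUnimodular.recurrence (hu : IsUnimodular e) (i j : ℤ) :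
    e i (j + 2) = coeff e i j * e i (j + 1) - e i j := by
  have h := hu i (j + 1)
  rw [add_assoc, one_add_one_eq_two] at h
  unfold coeff
  linear_combination (-e i j) * h - e i (j + 2) * hu i j

theorem IsUnimodular.recurrence_succ_row (hu : IsUnimodular e) (i j : ℤ) :
    e (i + 1) (j + 2) = coeff e i j * e (i + 1) (j + 1) - e (i + 1) j := by
  have h := hu i (j + 1)
  rw [add_assoc, one_add_one_eq_two] at h
  unfold coeff
  linear_combination (-e (i + 1) (j + 2)) * hu i j - e (i + 1) j * h

theorem IsTame.recurrence_add_two_row (hu : IsUnimodular e) (ht : IsTame e) (i j : ℤ) :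
    e (i + 2) (j + 2) = coeff e i j * e (i + 2) (j + 1) - e (i + 2) j := by
  have hdet := ht i j
  simp only [Matrix.det_fin_three, Matrix.of_apply, Fin.val_zero, Fin.val_one, Fin.val_two,
    Nat.cast_ofNat, Nat.cast_zero, Nat.cast_one, add_zero] at hdet
  rw [hu.recurrence i j, hu.recurrence_succ_row i j] at hdet
  linear_combination hdet -
    (e (i + 2) (j + 2) - coeff e i j * e (i + 2) (j + 1) + e (i + 2) j) * hu i j

theorem IsTame.coeff_succ (hu : IsUnimodular e) (ht : IsTame e) (i j : ℤ) :
    coeff e (i + 1) j = coeff e i j := by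
  have h₁ := hu.recurrence (i + 1) j
  have h₂ := hu.recurrence_succ_row (i + 1) j
  have h₃ := hu (i + 1) j
  rw [add_assoc, one_add_one_eq_two] at h₂ h₃
  -- both coefficients give a recurrence on rows `i+1` and `i+2`, so `coeff (i+1) j - coeff i j`
  -- kills column `j+1` of these rows, whose `2 × 2` minor with column `j` is `1`
  linear_combination -(coeff e (i + 1) j - coeff e i j) * h₃ +
    e (i + 1) j * (ht.recurrence_add_two_row hu i j - h₂) -
    e (i + 2) j * (hu.recurrence_succ_row i j - h₁)

theorem IsTame.coeff_eq (hu : IsUnimodular e) (ht : IsTame e) (i k j : ℤ) :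
    coeff e i j = coeff e k j := by
  have hper : Function.Periodic (fun i ↦ coeff e i j) 1 := fun i ↦ ht.coeff_succ hu i j
  simpa using (hper.int_mul_eq i).trans (hper.int_mul_eq k).symm

theorem IsTame.coeff_eq_diag (hu : IsUnimodular e) (ht : IsTame e)
    (h₀ : ∀ i, e i (i - 2) = 0) (h₁ : ∀ i, e i (i - 1) = 1) (i j : ℤ) :
    coeff e i j = e (j + 2) (j + 2) := by
  have hj₀ : e (j + 2) j = 0 := by simpa using h₀ (j + 2)
  have hj₁ : e (j + 2) (j + 1) = 1 := by simpa [add_sub_assoc] using h₁ (j + 2)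
  have h := hu.recurrence (j + 2) j
  rw [hj₀, hj₁] at h
  rw [ht.coeff_eq hu i (j + 2)]
  linear_combination -h

theorem IsTame.recurrence_diag (hu : IsUnimodular e) (ht : IsTame e)
    (h₀ : ∀ i, e i (i - 2) = 0) (h₁ : ∀ i, e i (i - 1) = 1) (i j : ℤ) :
    e i (j + 2) = e (j + 2) (j + 2) * e i (j + 1) - e i j := by
  rw [← ht.coeff_eq_diag hu h₀ h₁ i j]
  exact hu.recurrence i j

end SL2Tiling

theorem Subring.mem_of_recurrence {R : Type*} [CommRing R] (S : Subring R) {x c : ℤ → R}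
    (hrec : ∀ j, x (j + 2) = c j * x (j + 1) - x j) (hc : ∀ j, c j ∈ S) (j₀ : ℤ)
    (h₀ : x j₀ ∈ S) (h₁ : x (j₀ + 1) ∈ S) (j : ℤ) : x j ∈ S := by
  suffices x j ∈ S ∧ x (j + 1) ∈ S from this.1
  induction j using Int.inductionOn' (b := j₀) with
  | zero => exact ⟨h₀, h₁⟩
  | succ k _ ih =>
    refine ⟨ih.2, ?_⟩
    rw [add_assoc, one_add_one_eq_two, hrec]
    exact S.sub_mem (S.mul_mem (hc k) ih.2) ih.1
  | pred k _ ih =>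
    refine ⟨?_, by simpa using ih.1⟩
    have h := hrec (k - 1)
    rw [show k - 1 + 2 = k + 1 by ring, sub_add_cancel] at h
    rw [show x (k - 1) = c (k - 1) * x k - x (k + 1) by linear_combination h]
    exact S.sub_mem (S.mul_mem (hc _) ih.1) ih.2

open SL2Tiling in
theorem coxeter_frieze_integral_of_first_row_integral_general (e : ℤ → ℤ → ℝ)
    (hb0 : ∀ i : ℤ, e i (i - 2) = 0)
    (hb1 : ∀ i : ℤ, e i (i - 1) = 1)
    (huni : ∀ i j : ℤ,
      e i j * e (i + 1) (j + 1) - e i (j + 1) * e (i + 1) j = 1)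
    (htame : ∀ i j : ℤ,
      Matrix.det (Matrix.of fun r c : Fin 3 =>
        e (i + (r : ℕ)) (j + (c : ℕ))) = 0)
    (hrow : ∀ i : ℤ, ∃ z : ℤ, e i i = (z : ℝ)) :
    ∀ i j : ℤ, ∃ z : ℤ, e i j = (z : ℝ) := by
  have hu : IsUnimodular e := huni
  have ht : IsTame e := htame
  intro i j
  have hdiag (k : ℤ) : e (k + 2) (k + 2) ∈ (⊥ : Subring ℝ) :=
    Subring.mem_bot.2 ((hrow (k + 2)).imp fun _ hz ↦ hz.symm)
  have hstart : e i (i - 2 + 1) = 1 := by rw [show i - 2 + 1 = i - 1 by ring, hb1]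
  obtain ⟨z, hz⟩ := Subring.mem_bot.1 <| (⊥ : Subring ℝ).mem_of_recurrence
    (ht.recurrence_diag hu hb0 hb1 i) hdiag (i - 2) (by simp [hb0]) (by simp [hstart]) j
  exact ⟨z, hz.symm⟩

/-- **Integrality of Coxeter friezes with integral first row.**
If the first row of a tame Coxeter frieze pattern of width `m` over `ℝ` consists of
integers, then all entries of the frieze are integers. -/
theorem coxeter_frieze_integral_of_first_row_integral (m : ℕ) (e : ℤ → ℤ → ℝ)
    (hb0 : ∀ i : ℤ, e i (i - 2) = 0)
    (hb1 : ∀ i : ℤ, e i (i - 1) = 1)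
    (hb2 : ∀ i : ℤ, e i (i + m) = 1)
    (hb3 : ∀ i : ℤ, e i (i + m + 1) = 0)
    (huni : ∀ i j : ℤ,
      e i j * e (i + 1) (j + 1) - e i (j + 1) * e (i + 1) j = 1)
    (htame : ∀ i j : ℤ,
      Matrix.det (Matrix.of fun r c : Fin 3 =>
        e (i + (r : ℕ)) (j + (c : ℕ))) = 0)
    (hrow : ∀ i : ℤ, ∃ z : ℤ, e i i = (z : ℝ)) :
    ∀ i j : ℤ, ∃ z : ℤ, e i j = (z : ℝ) :=
  coxeter_frieze_integral_of_first_row_integral_general e hb0 hb1 huni htame hrow
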